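/- For each fixed x ∈ ℝ, the function φ(λ, α) = α·Ψ(x, λ/α) = α·[max{0, 2x + λ/α}² − (λ/α)²]/4 is concave on ℝ × (0, ∞) as a function of (λ, α). -/
import Mathlib


noncomputable def Psi (x y : ℝ) : ℝ := ((max 0 (2 * x + y)) ^ 2 - y ^ 2) / 4

lemma psi_le (x y s : ℝ) (hs : x ≤ s) : Psi x y ≤ s * y + s ^ 2 := by
  unfold Psi
  rcases le_or_gt (2 * x + y) 0 with h | h
  · rw [max_eq_left h]
    nlinarith [sq_nonneg (s + y / 2)]
  · rw [max_eq_right h.le]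
    nlinarith [mul_nonneg (sub_nonneg.2 hs) (by linarith : (0:ℝ) ≤ s + x + y)]

lemma psi_eq (x y : ℝ) : Psi x y = (max x (-y / 2)) * y + (max x (-y / 2)) ^ 2 := by
  unfold Psi
  rcases le_total (-y / 2) x with h | h
  · rw [max_eq_left h, max_eq_right (by linarith : (0:ℝ) ≤ 2 * x + y)]
    ring
  · rw [max_eq_right h, max_eq_left (by linarith : 2 * x + y ≤ 0)]
    ring

theorem perspective_psi_concave (x : ℝ) :
    ConcaveOn ℝ ((Set.univ : Set ℝ) ×ˢ Set.Ioi (0 : ℝ))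
      (fun p : ℝ × ℝ => p.2 * Psi x (p.1 / p.2)) := by
  constructor
  · exact convex_univ.prod (convex_Ioi 0)
  · rintro ⟨l1, a1⟩ ⟨-, (h1 : (0:ℝ) < a1)⟩ ⟨l2, a2⟩ ⟨-, (h2 : (0:ℝ) < a2)⟩ a b ha hb hab
    dsimp only
    have hα : 0 < a * a1 + b * a2 := by
      rcases eq_or_lt_of_le ha with rfl | ha'
      · simpa using mul_pos (by linarith : (0:ℝ) < b) h2
      · have : 0 ≤ b * a2 := mul_nonneg hb h2.le
        nlinarith
    set L : ℝ := a * l1 + b * l2 with hL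
    set A : ℝ := a * a1 + b * a2 with hA
    set s : ℝ := max x (-(L / A) / 2) with hsdef
    have hs : x ≤ s := le_max_left _ _
    have key : A * Psi x (L / A) = s * L + s ^ 2 * A := by
      have hy : A * (L / A) = L := mul_div_cancel₀ _ hα.ne'
      rw [psi_eq x (L / A), ← hsdef]
      calc A * (s * (L / A) + s ^ 2) = s * (A * (L / A)) + s ^ 2 * A := by ring
        _ = s * L + s ^ 2 * A := by rw [hy]
    have b1 : a1 * Psi x (l1 / a1) ≤ s * l1 + s ^ 2 * a1 := by
      have := psi_le x (l1 / a1) s hs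
      have h' := mul_le_mul_of_nonneg_left this h1.le
      calc a1 * Psi x (l1 / a1) ≤ a1 * (s * (l1 / a1) + s ^ 2) := h'
        _ = s * l1 + s ^ 2 * a1 := by field_simp
    have b2 : a2 * Psi x (l2 / a2) ≤ s * l2 + s ^ 2 * a2 := by
      have := psi_le x (l2 / a2) s hs
      have h' := mul_le_mul_of_nonneg_left this h2.le
      calc a2 * Psi x (l2 / a2) ≤ a2 * (s * (l2 / a2) + s ^ 2) := h'
        _ = s * l2 + s ^ 2 * a2 := by field_simp
    have e1 : (a • (l1, a1) + b • (l2, a2) : ℝ × ℝ).1 = L := rfl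
    have e2 : (a • (l1, a1) + b • (l2, a2) : ℝ × ℝ).2 = A := rfl
    rw [e1, e2, key]
    have t1 := mul_le_mul_of_nonneg_left b1 ha
    have t2 := mul_le_mul_of_nonneg_left b2 hb
    simp only [smul_eq_mul]
    nlinarith [t1, t2]
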